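/- arXiv:2006.15663 — 4 statements merged into one kernel-verified Lean document; each statement's English description precedes it below -/
import Mathlib

section
/- Let H be a real Hilbert space with orthonormal basis (e_n)_{n≥1}, and let λ_1 ≤ λ_2 ≤ ⋯ be positive reals tending to infinity. Fix γ ≥ 0 and L > 0, and suppose N satisfies (λ_{N+1}^{1+γ} - λ_N^{1+γ})/(λ_{N+1}^γ + λ_N^γ) > L. Let P_N be the orthogonal projection onto span{e_1,…,e_N} and Q_N = Id − P_N. Define α as the balanced constant α = λ_N^{1+γ}λ_{N+1}^γ/(λ_N^γ+λ_{N+1}^γ) + λ_{N+1}^{1+γ}λ_N^γ/(λ_N^γ+λ_{N+1}^γ). Then for every v in the domain of A (where A e_n = λ_n e_n), ((αA^{-γ} − A)P_N v, P_N v) + ((A − αA^{-γ})Q_N v, Q_N v) ≥ ((λ_{N+1}^{1+γ} − λ_N^{1+γ})/(λ_{N+1}^γ + λ_N^γ))·‖v‖_H². -/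
/-!
With `f x = x - α x^{-γ}`, the quadratic form is `∑_{n ≤ N} -f(λ_n) v_n² + ∑_{n > N} f(λ_n) v_n²`.
For `α ≥ 0` and `γ ≥ 0` the function `f` is increasing on `(0, ∞)`, and the balanced constant `α`
is exactly the one for which `f(λ_N) = -μ` and `f(λ_{N+1}) = μ`, where `μ` is the gap rate.
Monotonicity of `λ` then bounds every coefficient of the form below by `μ`.
-/

open Set

noncomputable def balancedConst (a b γ : ℝ) : ℝ :=
  a ^ (1 + γ) * b ^ γ / (a ^ γ + b ^ γ) + b ^ (1 + γ) * a ^ γ / (a ^ γ + b ^ γ)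

noncomputable def gapRate (a b γ : ℝ) : ℝ :=
  (b ^ (1 + γ) - a ^ (1 + γ)) / (b ^ γ + a ^ γ)

theorem monotoneOn_sub_mul_rpow_neg {α γ : ℝ} (hα : 0 ≤ α) (hγ : 0 ≤ γ) :
    MonotoneOn (fun x : ℝ => x - α * x ^ (-γ)) (Ioi 0) := fun x hx y _ hxy => by
  have hpow := Real.antitoneOn_rpow_Ioi_of_exponent_nonpos (neg_nonpos.mpr hγ) hx ‹y ∈ Ioi 0› hxy
  exact sub_le_sub hxy (mul_le_mul_of_nonneg_left hpow hα)

theorem sub_balancedConst_mul_rpow_neg_left {a b γ : ℝ} (ha : 0 < a) (hb : 0 < b) :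
    a - balancedConst a b γ * a ^ (-γ) = -gapRate a b γ := by
  have ha' : a ^ (1 + γ) = a * a ^ γ := by rw [Real.rpow_add ha, Real.rpow_one]
  have hb' : b ^ (1 + γ) = b * b ^ γ := by rw [Real.rpow_add hb, Real.rpow_one]
  have := Real.rpow_pos_of_pos ha γ
  have := Real.rpow_pos_of_pos hb γ
  rw [balancedConst, gapRate, Real.rpow_neg ha.le, ha', hb']
  field_simp
  ring

theorem sub_balancedConst_mul_rpow_neg_right {a b γ : ℝ} (ha : 0 < a) (hb : 0 < b) :
    b - balancedConst a b γ * b ^ (-γ) = gapRate a b γ := by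
  have ha' : a ^ (1 + γ) = a * a ^ γ := by rw [Real.rpow_add ha, Real.rpow_one]
  have hb' : b ^ (1 + γ) = b * b ^ γ := by rw [Real.rpow_add hb, Real.rpow_one]
  have := Real.rpow_pos_of_pos ha γ
  have := Real.rpow_pos_of_pos hb γ
  rw [balancedConst, gapRate, Real.rpow_neg hb.le, ha', hb']
  field_simp
  ring

theorem summable_of_summable_mul_of_le {ι : Type*} {l w : ι → ℝ} {c : ℝ} (hc : 0 < c)
    (hcl : ∀ i, c ≤ l i) (hw : ∀ i, 0 ≤ w i) (h : Summable fun i => l i * w i) :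
    Summable w := by
  refine Summable.of_nonneg_of_le hw (fun i => ?_) (h.mul_left c⁻¹)
  rw [le_inv_mul_iff₀ hc]
  exact mul_le_mul_of_nonneg_right (hcl i) (hw i)

section Spectrum

variable {l : ℕ → ℝ} (hl : 0 < l 0) (hmono : Monotone l)
include hl hmono

theorem pos_of_monotone (n : ℕ) : 0 < l n :=
  hl.trans_le (hmono n.zero_le)

theorem summable_sub_mul_rpow_neg_mul {γ α : ℝ} (hγ : 0 ≤ γ) {v : ℕ → ℝ}
    (hv : Summable fun n => l n * v n ^ 2) :
    Summable fun n => (l n - α * l n ^ (-γ)) * v n ^ 2 := by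
  have hv2 : Summable fun n => v n ^ 2 :=
    summable_of_summable_mul_of_le hl (fun n => hmono n.zero_le) (fun n => sq_nonneg _) hv
  have hneg : Summable fun n => l n ^ (-γ) * v n ^ 2 :=
    Summable.of_nonneg_of_le
      (fun n => mul_nonneg (Real.rpow_nonneg (pos_of_monotone hl hmono n).le _) (sq_nonneg _))
      (fun n => mul_le_mul_of_nonneg_right
        (Real.rpow_le_rpow_of_nonpos hl (hmono n.zero_le) (neg_nonpos.mpr hγ)) (sq_nonneg _))
      (hv2.mul_left (l 0 ^ (-γ)))
  simpa only [sub_mul, mul_assoc] using hv.sub (hneg.mul_left α)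

theorem gapRate_mul_sq_le {γ : ℝ} (hγ : 0 ≤ γ) (N n : ℕ) (x : ℝ) :
    gapRate (l N) (l (N + 1)) γ * x ^ 2
      ≤ (if n ≤ N then (balancedConst (l N) (l (N + 1)) γ * l n ^ (-γ) - l n) * x ^ 2 else 0)
        + (if N < n then (l n - balancedConst (l N) (l (N + 1)) γ * l n ^ (-γ)) * x ^ 2
          else 0) := by
  have hpos := pos_of_monotone hl hmono
  have hf := monotoneOn_sub_mul_rpow_neg
    (α := balancedConst (l N) (l (N + 1)) γ) (by
      have := hpos N; have := hpos (N + 1); unfold balancedConst; positivity) hγ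
  rcases le_or_gt n N with hn | hn
  · have hcoef := hf (hpos n) (hpos N) (hmono hn)
    rw [if_pos hn, if_neg hn.not_gt, add_zero]
    simp only [sub_balancedConst_mul_rpow_neg_left (hpos N) (hpos (N + 1))] at hcoef
    exact mul_le_mul_of_nonneg_right (by linarith) (sq_nonneg x)
  · have hcoef := hf (hpos (N + 1)) (hpos n) (hmono hn)
    rw [if_neg hn.not_ge, if_pos hn, zero_add]
    simp only [sub_balancedConst_mul_rpow_neg_right (hpos N) (hpos (N + 1))] at hcoef
    exact mul_le_mul_of_nonneg_right hcoef (sq_nonneg x)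

end Spectrum

theorem stmt5_general (l : ℕ → ℝ) (hl : 0 < l 0) (hmono : Monotone l)
    (γ : ℝ) (hγ : 0 ≤ γ) (N : ℕ)
    (α : ℝ)
    (hα : α = l N ^ (1 + γ) * l (N + 1) ^ γ / (l N ^ γ + l (N + 1) ^ γ)
        + l (N + 1) ^ (1 + γ) * l N ^ γ / (l N ^ γ + l (N + 1) ^ γ))
    (v : ℕ → ℝ) (hv : Summable fun n => l n * v n ^ 2) :
    (∑' n, if n ≤ N then (α * l n ^ (-γ) - l n) * v n ^ 2 else 0)
      + (∑' n, if N < n then (l n - α * l n ^ (-γ)) * v n ^ 2 else 0)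
      ≥ (l (N + 1) ^ (1 + γ) - l N ^ (1 + γ)) / (l (N + 1) ^ γ + l N ^ γ)
        * ∑' n, v n ^ 2 := by
  change _ ≥ gapRate (l N) (l (N + 1)) γ * _
  obtain rfl : α = balancedConst (l N) (l (N + 1)) γ := hα
  have hv2 : Summable fun n => v n ^ 2 :=
    summable_of_summable_mul_of_le hl (fun n => hmono n.zero_le) (fun n => sq_nonneg _) hv
  have hlow : Summable fun n =>
      if n ≤ N then (balancedConst (l N) (l (N + 1)) γ * l n ^ (-γ) - l n) * v n ^ 2 else 0 :=
    summable_of_ne_finset_zero (s := Finset.range (N + 1)) fun n hn => by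
      rw [Finset.mem_range, not_lt] at hn
      exact if_neg (by omega)
  have hhigh : Summable fun n =>
      if N < n then (l n - balancedConst (l N) (l (N + 1)) γ * l n ^ (-γ)) * v n ^ 2 else 0 :=
    (summable_sub_mul_rpow_neg_mul (α := balancedConst (l N) (l (N + 1)) γ) hl hmono hγ hv).abs
      |>.of_norm_bounded fun n => by
        split_ifs
        · exact le_rfl
        · exact norm_zero.trans_le (abs_nonneg _)
  rw [ge_iff_le, ← hlow.tsum_add hhigh, ← tsum_mul_left]
  exact (hv2.mul_left _).tsum_le_tsum (fun n => gapRate_mul_sq_le hl hmono hγ N n (v n))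
    (hlow.add hhigh)

/-- Key quadratic-form estimate under spectral gap conditions (Proposition 3.1):
((αA^{-γ} − A)P_N v, P_N v) + ((A − αA^{-γ})Q_N v, Q_N v) ≥ μ̄ ‖v‖², written in the
coordinates of the orthonormal eigenbasis (e_n), where A e_n = λ_n e_n,
P_N projects onto the first modes (indices n ≤ N) and Q_N onto the rest. -/
theorem stmt5 (l : ℕ → ℝ) (hl : 0 < l 0) (hmono : Monotone l)
    (htop : Filter.Tendsto l Filter.atTop Filter.atTop)
    (γ L : ℝ) (hγ : 0 ≤ γ) (hL : 0 < L) (N : ℕ)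
    (hgap : (l (N + 1) ^ (1 + γ) - l N ^ (1 + γ)) / (l (N + 1) ^ γ + l N ^ γ) > L)
    (α : ℝ)
    (hα : α = l N ^ (1 + γ) * l (N + 1) ^ γ / (l N ^ γ + l (N + 1) ^ γ)
        + l (N + 1) ^ (1 + γ) * l N ^ γ / (l N ^ γ + l (N + 1) ^ γ))
    (v : ℕ → ℝ) (hv : Summable fun n => l n * v n ^ 2) :
    (∑' n, if n ≤ N then (α * l n ^ (-γ) - l n) * v n ^ 2 else 0)
      + (∑' n, if N < n then (l n - α * l n ^ (-γ)) * v n ^ 2 else 0)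
      ≥ (l (N + 1) ^ (1 + γ) - l N ^ (1 + γ)) / (l (N + 1) ^ γ + l N ^ γ)
        * ∑' n, v n ^ 2 :=
  stmt5_general l hl hmono γ hγ N α hα v hv
end

section
/- Under the setting of the truncation function W(u) = Σ_n C_* λ_n^{-s/2} φ(λ_n^{s/2}(u,e_n)/C_*) e_n, suppose s_0 > 0 satisfies Σ_n λ_n^{s_0 - s} < ∞. Then W is bounded from H to H^{s_0}: there is a constant M with ‖W(u)‖_{H^{s_0}} ≤ M for all u ∈ H; moreover W: H → H^{s_0} is continuous. -/
/-!
Every coefficient of `W(u)` is dominated, uniformly in `u`, by `b n = 2 |C_*| λ_n^{-s/2}`,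
since `|φ| ≤ 2`, and `Σ λ_n^{s₀} b_n² = 4 C_*² Σ λ_n^{s₀-s} < ∞`. This bounds the
`H^{s₀}`-norm of `W(u)`. For continuity, `v ↦ ‖W(v) - W(u)‖²_{H^{s₀}}` is a series of functions
continuous in `v` (as `φ` is) and dominated by the summable `4 λ_n^{s₀} b_n²`, hence continuous
(Weierstrass M-test); it vanishes at `v = u`.
-/

open scoped RealInnerProductSpace

lemma mul_sq_le_mul_sq_of_abs_le {r c b : ℝ} (hr : 0 ≤ r) (h : |c| ≤ b) : r * c ^ 2 ≤ r * b ^ 2 :=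
  mul_le_mul_of_nonneg_left (sq_le_sq' (neg_le_of_abs_le h) (le_of_abs_le h)) hr

section WeightedSeries

variable {ρ b : ℕ → ℝ} (hρ : ∀ n, 0 ≤ ρ n)
include hρ

lemma summable_weighted_sq_of_abs_le {c : ℕ → ℝ} (hcb : ∀ n, |c n| ≤ b n)
    (hb : Summable fun n => ρ n * b n ^ 2) : Summable fun n => ρ n * c n ^ 2 :=
  hb.of_nonneg_of_le (fun n => mul_nonneg (hρ n) (sq_nonneg _))
    fun n => mul_sq_le_mul_sq_of_abs_le (hρ n) (hcb n)

lemma tsum_weighted_sq_le_of_abs_le {c : ℕ → ℝ} (hcb : ∀ n, |c n| ≤ b n)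
    (hb : Summable fun n => ρ n * b n ^ 2) :
    ∑' n, ρ n * c n ^ 2 ≤ ∑' n, ρ n * b n ^ 2 :=
  (summable_weighted_sq_of_abs_le hρ hcb hb).tsum_le_tsum
    (fun n => mul_sq_le_mul_sq_of_abs_le (hρ n) (hcb n)) hb

lemma continuous_tsum_weighted_sq_sub {X : Type*} [TopologicalSpace X] {c : X → ℕ → ℝ}
    (hc : ∀ n, Continuous fun x => c x n) (hcb : ∀ x n, |c x n| ≤ b n)
    (hb : Summable fun n => ρ n * b n ^ 2) (y : X) :
    Continuous fun x => ∑' n, ρ n * (c x n - c y n) ^ 2 := by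
  have hdiff : ∀ x n, |c x n - c y n| ≤ 2 * b n := fun x n => by
    linarith [abs_sub (c x n) (c y n), hcb x n, hcb y n]
  refine continuous_tsum (fun n => continuous_const.mul (((hc n).sub continuous_const).pow 2))
    (hb.mul_left 4) fun n x => ?_
  rw [Real.norm_of_nonneg (mul_nonneg (hρ n) (sq_nonneg _))]
  calc ρ n * (c x n - c y n) ^ 2 ≤ ρ n * (2 * b n) ^ 2 :=
        mul_sq_le_mul_sq_of_abs_le (hρ n) (hdiff x n)
    _ = 4 * (ρ n * b n ^ 2) := by ring

end WeightedSeries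

lemma rpow_mul_rpow_neg_half_sq {x : ℝ} (hx : 0 < x) (s s₀ : ℝ) :
    x ^ s₀ * (x ^ (-(s / 2))) ^ 2 = x ^ (s₀ - s) := by
  rw [← Real.rpow_natCast, ← Real.rpow_mul hx.le, ← Real.rpow_add hx]
  congr 1
  push_cast
  ring

theorem stmt7_general {H : Type*} [NormedAddCommGroup H] [InnerProductSpace ℝ H]
    (e : HilbertBasis ℕ ℝ H) (l : ℕ → ℝ) (hl : 0 < l 0) (hmono : Monotone l)
    (φ : ℝ → ℝ) (hφc : Continuous φ) (hφb : ∀ z : ℝ, |φ z| ≤ 2)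
    (Cs s s₀ : ℝ)
    (hsum : Summable fun n => l n ^ (s₀ - s)) :
    (∃ M : ℝ, ∀ u : H,
        (∑' n, l n ^ s₀ * (Cs * l n ^ (-(s / 2)) * φ (l n ^ (s / 2) * ⟪u, e n⟫ / Cs)) ^ 2)
          ≤ M ^ 2)
    ∧ ∀ u : H, ∀ ε > (0:ℝ), ∃ δ > (0:ℝ), ∀ v : H, ‖v - u‖ < δ →
        (∑' n, l n ^ s₀ *
            (Cs * l n ^ (-(s / 2)) * φ (l n ^ (s / 2) * ⟪v, e n⟫ / Cs)
              - Cs * l n ^ (-(s / 2)) * φ (l n ^ (s / 2) * ⟪u, e n⟫ / Cs)) ^ 2)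
          < ε ^ 2 := by
  have hpos : ∀ n, 0 < l n := fun n => hl.trans_le (hmono n.zero_le)
  have hρ : ∀ n, 0 ≤ l n ^ s₀ := fun n => Real.rpow_nonneg (hpos n).le _
  have hρ' : ∀ n, 0 ≤ l n ^ (-(s / 2)) := fun n => Real.rpow_nonneg (hpos n).le _
  set b : ℕ → ℝ := fun n => |Cs| * l n ^ (-(s / 2)) * 2
  have hcb : ∀ u n, |Cs * l n ^ (-(s / 2)) * φ (l n ^ (s / 2) * ⟪u, e n⟫ / Cs)| ≤ b n :=
    fun u n => by
      rw [abs_mul, abs_mul, abs_of_nonneg (hρ' n)]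
      exact mul_le_mul_of_nonneg_left (hφb _) (mul_nonneg (abs_nonneg _) (hρ' n))
  have hb : Summable fun n => l n ^ s₀ * b n ^ 2 := by
    refine (hsum.mul_left (4 * Cs ^ 2)).congr fun n => ?_
    rw [← rpow_mul_rpow_neg_half_sq (hpos n) s s₀]
    simp only [b, mul_pow, sq_abs]
    ring
  refine ⟨⟨√(∑' n, l n ^ s₀ * b n ^ 2), fun u => ?_⟩, fun u ε hε => ?_⟩
  · rw [Real.sq_sqrt (tsum_nonneg fun n => mul_nonneg (hρ n) (sq_nonneg _))]
    exact tsum_weighted_sq_le_of_abs_le hρ (hcb u) hb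
  · have hcont := continuous_tsum_weighted_sq_sub hρ (fun n => by fun_prop) hcb hb u
    obtain ⟨δ, hδ, hclose⟩ := Metric.continuous_iff.mp hcont u (ε ^ 2) (by positivity)
    exact ⟨δ, hδ, fun v hv =>
      lt_of_abs_lt (by simpa [Real.dist_eq] using hclose v (by rwa [dist_eq_norm]))⟩

/-- Statement 1 of Proposition 4.1: if Σ_n λ_n^{s_0-s} < ∞ then the truncation map
W(u) = Σ_n C_* λ_n^{-s/2} φ(λ_n^{s/2}(u,e_n)/C_*) e_n is bounded from H to H^{s_0}
(‖W(u)‖_{H^{s_0}} ≤ M uniformly) and continuous from H to H^{s_0}; both properties are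
expressed via the H^{s_0}-norm Σ_n λ_n^{s_0}·(coefficient)². -/
theorem stmt7 {H : Type*} [NormedAddCommGroup H] [InnerProductSpace ℝ H] [CompleteSpace H]
    (e : HilbertBasis ℕ ℝ H) (l : ℕ → ℝ) (hl : 0 < l 0) (hmono : Monotone l)
    (φ : ℝ → ℝ) (hφc : Continuous φ) (hφb : ∀ z : ℝ, |φ z| ≤ 2)
    (hφ1 : ∀ z : ℝ, |z| ≤ 1 → φ z = z) (hφ2 : ∀ z : ℝ, 2 ≤ |z| → φ z = 2)
    (Cs s s₀ : ℝ) (hCs : 0 < Cs) (hs₀ : 0 < s₀) (hs : s₀ < s)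
    (hsum : Summable fun n => l n ^ (s₀ - s)) :
    (∃ M : ℝ, ∀ u : H,
        (∑' n, l n ^ s₀ * (Cs * l n ^ (-(s / 2)) * φ (l n ^ (s / 2) * ⟪u, e n⟫ / Cs)) ^ 2)
          ≤ M ^ 2)
    ∧ ∀ u : H, ∀ ε > (0:ℝ), ∃ δ > (0:ℝ), ∀ v : H, ‖v - u‖ < δ →
        (∑' n, l n ^ s₀ *
            (Cs * l n ^ (-(s / 2)) * φ (l n ^ (s / 2) * ⟪v, e n⟫ / Cs)
              - Cs * l n ^ (-(s / 2)) * φ (l n ^ (s / 2) * ⟪u, e n⟫ / Cs)) ^ 2)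
          < ε ^ 2 :=
  stmt7_general e l hl hmono φ hφc hφb Cs s s₀ hsum
end

section
/- For every k > 0 and r > 0, there exist infinitely many N ∈ ℕ such that the set (𝒞^k_N − 𝒞^k_N) ∩ 𝓑_r = {0}, where 𝒞^k_N := {l ∈ ℤ³ : N − k ≤ |l|² ≤ N + k} and 𝓑_r := {l ∈ ℤ³ : |l| ≤ r}. -/
open scoped Pointwise

/-- The squared Euclidean norm of a triple of integers. -/
def sqNorm (l : ℤ × ℤ × ℤ) : ℤ := l.1 ^ 2 + l.2.1 ^ 2 + l.2.2 ^ 2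

/-- The annulus 𝒞^k_N = {l ∈ ℤ³ : N − k ≤ |l|² ≤ N + k}. -/
def annulus (k : ℝ) (N : ℕ) : Set (ℤ × ℤ × ℤ) :=
  {l | (N : ℝ) - k ≤ (sqNorm l : ℝ) ∧ (sqNorm l : ℝ) ≤ (N : ℝ) + k}

/-- The ball 𝓑_r = {l ∈ ℤ³ : |l| ≤ r}. -/
def ball3 (r : ℝ) : Set (ℤ × ℤ × ℤ) := {l | (sqNorm l : ℝ) ≤ r ^ 2}

/-!
If `l, l' ∈ 𝒞^k_N` and `d = l - l'` is a nonzero vector of `𝓑_r`, then `v = l' × d` is orthogonal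
to `d` and `|v|² = m N + a` with `m = |d|²`, where the pair `(m, a)` ranges over a finite set that
depends only on `k` and `r`. Orthogonality forbids `|v|²` from being divisible exactly once by a
prime `q` modulo which `-m` is not a square: modulo `q`, `v` would be a nonzero isotropic vector
orthogonal to `d`, and this forces `-|d|²` to be a square mod `q`.

For each pair `(m, a)`, Dirichlet's theorem gives a large prime `q ≡ -1 (mod 4m)`, for which `-m`
is a nonresidue, and one class of `N` modulo `q²` on which `q` divides `mN + a` exactly once. The
Chinese remainder theorem merges these classes into a single class modulo `M`. Since every residue
modulo an odd `q²` is a sum of three squares, this class contains the values `N = |l₀|²` of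
infinitely many `l₀`, and for those `N` the difference set `𝒞^k_N - 𝒞^k_N` is nonempty but meets
`𝓑_r` only in `0`.
-/

def dot3 (u w : ℤ × ℤ × ℤ) : ℤ := u.1 * w.1 + u.2.1 * w.2.1 + u.2.2 * w.2.2

def cross3 (u w : ℤ × ℤ × ℤ) : ℤ × ℤ × ℤ :=
  (u.2.1 * w.2.2 - u.2.2 * w.2.1, u.2.2 * w.1 - u.1 * w.2.2, u.1 * w.2.1 - u.2.1 * w.1)

lemma dot3_cross3_right (u w : ℤ × ℤ × ℤ) : dot3 (cross3 u w) w = 0 := by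
  simp only [dot3, cross3]; ring

lemma sqNorm_cross3 (u w : ℤ × ℤ × ℤ) :
    sqNorm (cross3 u w) = sqNorm u * sqNorm w - dot3 u w ^ 2 := by
  simp only [sqNorm, dot3, cross3]; ring

lemma sqNorm_add (u w : ℤ × ℤ × ℤ) :
    sqNorm (u + w) = sqNorm u + 2 * dot3 u w + sqNorm w := by
  simp only [sqNorm, dot3, Prod.fst_add, Prod.snd_add]; ring

lemma sqNorm_nonneg (u : ℤ × ℤ × ℤ) : 0 ≤ sqNorm u := by
  unfold sqNorm; positivity

lemma sqNorm_pos {u : ℤ × ℤ × ℤ} (hu : u ≠ 0) : 0 < sqNorm u := by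
  obtain ⟨a, b, c⟩ := u
  have : a ≠ 0 ∨ b ≠ 0 ∨ c ≠ 0 := by
    contrapose! hu; simp [hu]
  unfold sqNorm
  rcases this with h | h | h <;> positivity

lemma sqNorm_modEq {n : ℤ} {u w : ℤ × ℤ × ℤ} (h₁ : u.1 ≡ w.1 [ZMOD n])
    (h₂ : u.2.1 ≡ w.2.1 [ZMOD n]) (h₃ : u.2.2 ≡ w.2.2 [ZMOD n]) :
    sqNorm u ≡ sqNorm w [ZMOD n] :=
  ((h₁.pow 2).add (h₂.pow 2)).add (h₃.pow 2)

-- For `a ⊥ d` isotropic, `(a₂ d₃ - a₃ d₂)² = -|d|² a₁²`: the first coordinate of `a × d`.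
lemma isSquare_neg_sum_sq_of_isotropic_of_ne_zero {F : Type*} [Field F]
    {a₁ a₂ a₃ d₁ d₂ d₃ : F} (ha₁ : a₁ ≠ 0) (hdot : a₁ * d₁ + a₂ * d₂ + a₃ * d₃ = 0)
    (hiso : a₁ ^ 2 + a₂ ^ 2 + a₃ ^ 2 = 0) : IsSquare (-(d₁ ^ 2 + d₂ ^ 2 + d₃ ^ 2)) := by
  refine ⟨(a₂ * d₃ - a₃ * d₂) / a₁, ?_⟩
  field_simp
  linear_combination (a₂ * d₂ + a₃ * d₃ - a₁ * d₁) * hdot - (d₂ ^ 2 + d₃ ^ 2) * hiso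

lemma isSquare_neg_sum_sq_of_isotropic {F : Type*} [Field F] {a₁ a₂ a₃ d₁ d₂ d₃ : F}
    (ha : a₁ ≠ 0 ∨ a₂ ≠ 0 ∨ a₃ ≠ 0) (hdot : a₁ * d₁ + a₂ * d₂ + a₃ * d₃ = 0)
    (hiso : a₁ ^ 2 + a₂ ^ 2 + a₃ ^ 2 = 0) : IsSquare (-(d₁ ^ 2 + d₂ ^ 2 + d₃ ^ 2)) := by
  rcases ha with ha | ha | ha
  · exact isSquare_neg_sum_sq_of_isotropic_of_ne_zero ha hdot hiso
  · obtain ⟨s, hs⟩ := isSquare_neg_sum_sq_of_isotropic_of_ne_zero (a₂ := a₃) (a₃ := a₁)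
      (d₁ := d₂) (d₂ := d₃) (d₃ := d₁) ha (by linear_combination hdot) (by linear_combination hiso)
    exact ⟨s, by linear_combination hs⟩
  · obtain ⟨s, hs⟩ := isSquare_neg_sum_sq_of_isotropic_of_ne_zero (a₂ := a₁) (a₃ := a₂)
      (d₁ := d₃) (d₂ := d₁) (d₃ := d₂) ha (by linear_combination hdot) (by linear_combination hiso)
    exact ⟨s, by linear_combination hs⟩

lemma isSquare_neg_sqNorm_of_dot3_eq_zero {q : ℕ} (hq : q.Prime) {v d : ℤ × ℤ × ℤ}
    (hvd : dot3 v d = 0) (h₁ : (q : ℤ) ∣ sqNorm v) (h₂ : ¬(q : ℤ) ^ 2 ∣ sqNorm v) :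
    IsSquare ((-sqNorm d : ℤ) : ZMod q) := by
  have : Fact q.Prime := ⟨hq⟩
  obtain ⟨v₁, v₂, v₃⟩ := v
  obtain ⟨d₁, d₂, d₃⟩ := d
  have hv : (v₁ : ZMod q) ≠ 0 ∨ (v₂ : ZMod q) ≠ 0 ∨ (v₃ : ZMod q) ≠ 0 := by
    simp only [ne_eq, ZMod.intCast_zmod_eq_zero_iff_dvd]
    contrapose! h₂
    obtain ⟨⟨c₁, rfl⟩, ⟨c₂, rfl⟩, ⟨c₃, rfl⟩⟩ := h₂
    exact ⟨c₁ ^ 2 + c₂ ^ 2 + c₃ ^ 2, by simp only [sqNorm]; ring⟩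
  have hdot := congrArg (Int.cast : ℤ → ZMod q) hvd
  have hiso := (ZMod.intCast_zmod_eq_zero_iff_dvd _ _).mpr h₁
  simp only [dot3, sqNorm] at hdot hiso ⊢
  push_cast at hdot hiso ⊢
  exact isSquare_neg_sum_sq_of_isotropic hv hdot hiso

def NonresidueExactDvd (m n : ℤ) : Prop :=
  ∃ q : ℕ, q.Prime ∧ ¬IsSquare ((-m : ℤ) : ZMod q) ∧ (q : ℤ) ∣ n ∧ ¬(q : ℤ) ^ 2 ∣ n

lemma NonresidueExactDvd.sqNorm_ne {v d : ℤ × ℤ × ℤ} {n : ℤ}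
    (h : NonresidueExactDvd (sqNorm d) n) (hvd : dot3 v d = 0) : sqNorm v ≠ n := by
  rintro rfl
  obtain ⟨q, hq, hns, h₁, h₂⟩ := h
  exact hns (isSquare_neg_sqNorm_of_dot3_eq_zero hq hvd h₁ h₂)

lemma exists_prime_gt_not_isSquare_neg {m : ℤ} (hm : 0 < m) (B : ℕ) :
    ∃ q : ℕ, q.Prime ∧ B < q ∧ ¬IsSquare ((-m : ℤ) : ZMod q) := by
  set b := 4 * m.natAbs with hb
  have hb1 : 1 ≤ m.natAbs := by omega
  have : NeZero b := ⟨by omega⟩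
  obtain ⟨q, hqB, hq, hqb⟩ :=
    Nat.forall_exists_prime_gt_and_eq_mod (isUnit_one.neg : IsUnit (-1 : ZMod b)) B
  have hqmod : q % b = b - 1 := by
    obtain ⟨T, hT⟩ := (ZMod.natCast_eq_zero_iff _ _).mp
      (by push_cast [hqb]; ring : ((q + 1 : ℕ) : ZMod b) = 0)
    have hbT : b ≤ b * T :=
      Nat.le_mul_of_pos_right b (Nat.pos_of_ne_zero (by rintro rfl; simp at hT))
    rw [show q = (b - 1) + b * (T - 1) by rw [Nat.mul_sub_one]; omega,
      Nat.add_mul_mod_self_left, Nat.mod_eq_of_lt (by omega)]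
  have hq4 : q % 4 = 3 := by
    rw [← Nat.mod_mod_of_dvd q (dvd_mul_right 4 m.natAbs), ← hb, hqmod]; omega
  have hodd : Odd q := Nat.odd_iff.mpr (by omega)
  have hb' : Odd (b - 1) := Nat.odd_iff.mpr (by omega)
  have hmod : -m * 4 ≡ -1 [ZMOD ((b - 1 : ℕ) : ℤ)] := by
    refine Int.modEq_iff_dvd.mpr ⟨1, ?_⟩
    push_cast [hb, Nat.cast_sub (by omega : 1 ≤ 4 * m.natAbs), Int.natCast_natAbs, abs_of_pos hm]
    ring
  refine ⟨q, hq, hqB, ZMod.nonsquare_of_jacobiSym_eq_neg_one ?_⟩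
  -- `J(-m | q) = J(-m | 4m - 1)`, and modulo `4m - 1` we have `-m ≡ -1 / 4` with `4` a square.
  calc jacobiSym (-m) q = jacobiSym (-m) (b - 1) * jacobiSym 4 (b - 1) := by
        rw [jacobiSym.mod_right _ hodd, Int.natAbs_neg, ← hb, hqmod, jacobiSym.at_four hb', mul_one]
    _ = -1 := by
        rw [← jacobiSym.mul_left, jacobiSym.mod_left' hmod, jacobiSym.at_neg_one hb',
          ZMod.χ₄_nat_three_mod_four (by omega)]

lemma exists_sq_modEq_sq_of_sq_modEq {q : ℕ} (hq : q.Prime) (hq2 : q ≠ 2) {x a : ℤ}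
    (hx : ¬(q : ℤ) ∣ x) (h : x ^ 2 ≡ a [ZMOD q]) : ∃ y : ℤ, y ^ 2 ≡ a [ZMOD q ^ 2] := by
  obtain ⟨s, hs⟩ := h.dvd
  have hq2x : IsCoprime (q : ℤ) (2 * x) := by
    refine (Prime.coprime_iff_not_dvd (Nat.prime_iff_prime_int.mp hq)).mpr fun h2x => ?_
    rcases (Nat.prime_iff_prime_int.mp hq).dvd_or_dvd h2x with h2 | h2
    · exact hq2 ((Nat.prime_dvd_prime_iff_eq hq Nat.prime_two).mp (by exact_mod_cast h2))
    · exact hx h2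
  obtain ⟨u, t, hut⟩ := hq2x
  -- Newton step: `x + q t s` corrects the error `a - x² = q s`, since `2 x t ≡ 1 [ZMOD q]`.
  refine ⟨x + q * t * s, Int.modEq_iff_dvd.mpr ⟨s * (u - t ^ 2 * s), ?_⟩⟩
  linear_combination hs - q * s * hut

lemma exists_sqNorm_modEq_sq {q : ℕ} (hq : q.Prime) (hq2 : q ≠ 2) (c : ℤ) :
    ∃ w : ℤ × ℤ × ℤ, sqNorm w ≡ c [ZMOD q ^ 2] := by
  have : Fact q.Prime := ⟨hq⟩
  obtain ⟨z, hz⟩ : ∃ z : ℤ, ¬(q : ℤ) ∣ c - z ^ 2 := by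
    by_cases hc : (q : ℤ) ∣ c
    · refine ⟨1, fun h => hq.one_lt.ne' ?_⟩
      exact_mod_cast Int.eq_one_of_dvd_one (Int.natCast_nonneg q) (by simpa using dvd_sub hc h)
    · exact ⟨0, by simpa using hc⟩
  obtain ⟨x, y, hxy, hx⟩ : ∃ x y : ZMod q, x ^ 2 + y ^ 2 = ((c - z ^ 2 : ℤ) : ZMod q) ∧ x ≠ 0 := by
    obtain ⟨x, y, hxy⟩ := ZMod.sq_add_sq q ((c - z ^ 2 : ℤ) : ZMod q)
    by_cases hx : x = 0
    · refine ⟨y, x, by rw [← hxy]; ring, fun hy => hz ?_⟩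
      rw [← ZMod.intCast_zmod_eq_zero_iff_dvd, ← hxy, hx, hy]; ring
    · exact ⟨x, y, hxy, hx⟩
  obtain ⟨x, rfl⟩ := ZMod.intCast_surjective x
  obtain ⟨y, rfl⟩ := ZMod.intCast_surjective y
  obtain ⟨x', hx'⟩ := exists_sq_modEq_sq_of_sq_modEq hq hq2 (x := x) (a := c - (y ^ 2 + z ^ 2))
    (by rwa [ne_eq, ZMod.intCast_zmod_eq_zero_iff_dvd] at hx)
    ((ZMod.intCast_eq_intCast_iff _ _ _).mp (by push_cast at hxy ⊢; linear_combination hxy))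
  refine ⟨(x', y, z), ?_⟩
  have := hx'.add_right (y ^ 2 + z ^ 2)
  rwa [sub_add_cancel, ← add_assoc] at this

lemma exists_modEq_and_modEq {M n : ℤ} (h : IsCoprime M n) (a b : ℤ) :
    ∃ c : ℤ, c ≡ a [ZMOD M] ∧ c ≡ b [ZMOD n] := by
  obtain ⟨u, v, huv⟩ := h
  refine ⟨a * (v * n) + b * (u * M), (Int.modEq_iff_dvd.mpr ⟨(b - a) * u, ?_⟩).symm,
    (Int.modEq_iff_dvd.mpr ⟨(a - b) * v, ?_⟩).symm⟩
  · linear_combination a * huv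
  · linear_combination b * huv

lemma exists_sqNorm_modEq_and_modEq {M n : ℤ} (h : IsCoprime M n) (w₁ w₂ : ℤ × ℤ × ℤ) :
    ∃ w : ℤ × ℤ × ℤ, sqNorm w ≡ sqNorm w₁ [ZMOD M] ∧ sqNorm w ≡ sqNorm w₂ [ZMOD n] := by
  obtain ⟨x, hx₁, hx₂⟩ := exists_modEq_and_modEq h w₁.1 w₂.1
  obtain ⟨y, hy₁, hy₂⟩ := exists_modEq_and_modEq h w₁.2.1 w₂.2.1
  obtain ⟨z, hz₁, hz₂⟩ := exists_modEq_and_modEq h w₁.2.2 w₂.2.2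
  exact ⟨(x, y, z), sqNorm_modEq hx₁ hy₁ hz₁, sqNorm_modEq hx₂ hy₂ hz₂⟩

lemma dvd_and_not_sq_dvd_of_modEq {q n : ℤ} (hq : 1 < q) (h : n ≡ q [ZMOD q ^ 2]) :
    q ∣ n ∧ ¬q ^ 2 ∣ n := by
  obtain ⟨s, hs⟩ := h.dvd
  refine ⟨⟨1 - q * s, by linear_combination -hs⟩, fun hn => ?_⟩
  have : q ^ 2 ∣ q := by simpa using dvd_add hn h.dvd
  exact absurd (Int.le_of_dvd (by omega) this) (by nlinarith)

lemma exists_forall_modEq_nonresidueExactDvd {m : ℤ} {q : ℕ} (hq : q.Prime)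
    (hm : ¬IsSquare ((-m : ℤ) : ZMod q)) (a : ℤ) :
    ∃ e : ℤ, ∀ N : ℤ, N ≡ e [ZMOD q ^ 2] → NonresidueExactDvd m (m * N + a) := by
  have hqm : ¬(q : ℤ) ∣ m := fun h => hm ⟨0, by
    rw [mul_zero, ZMod.intCast_zmod_eq_zero_iff_dvd]; exact h.neg_right⟩
  obtain ⟨u, v, huv⟩ :=
    ((Prime.coprime_iff_not_dvd (Nat.prime_iff_prime_int.mp hq)).mpr hqm).symm.pow_right (n := 2)
  refine ⟨u * (q - a), fun N hN =>
    ⟨q, hq, hm, dvd_and_not_sq_dvd_of_modEq (by exact_mod_cast hq.one_lt) ?_⟩⟩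
  calc m * N + a ≡ m * (u * (q - a)) + a [ZMOD q ^ 2] := (hN.mul_left m).add_right a
    _ = q + q ^ 2 * (-(v * (q - a))) := by linear_combination (q - a) * huv
    _ ≡ q [ZMOD q ^ 2] := Int.modEq_add_fac_self

lemma exists_modulus_forall_nonresidueExactDvd (S : Finset (ℤ × ℤ)) (hS : ∀ t ∈ S, 0 < t.1) :
    ∃ M : ℕ, 0 < M ∧ ∃ w : ℤ × ℤ × ℤ, ∀ N : ℤ, N ≡ sqNorm w [ZMOD M] →
      ∀ t ∈ S, NonresidueExactDvd t.1 (t.1 * N + t.2) := by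
  induction S using Finset.induction_on with
  | empty => exact ⟨1, one_pos, 0, by simp⟩
  | insert t S _ ih =>
    obtain ⟨M, hM, w, hw⟩ := ih fun t' ht' => hS t' (Finset.mem_insert_of_mem ht')
    obtain ⟨q, hq, hMq, hnsq⟩ :=
      exists_prime_gt_not_isSquare_neg (hS t (Finset.mem_insert_self t S)) (max M 2)
    obtain ⟨e, he⟩ := exists_forall_modEq_nonresidueExactDvd hq hnsq t.2
    obtain ⟨w₂, hw₂⟩ := exists_sqNorm_modEq_sq hq (by omega) e
    have hMq : IsCoprime (M : ℤ) ((q : ℤ) ^ 2) := by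
      exact_mod_cast Nat.isCoprime_iff_coprime.mpr
        ((Nat.coprime_of_lt_prime hM.ne' (by omega) hq).pow_left 2).symm
    obtain ⟨w', hw'M, hw'q⟩ := exists_sqNorm_modEq_and_modEq hMq w w₂
    refine ⟨M * q ^ 2, Nat.mul_pos hM (pow_pos hq.pos 2), w', fun N hN => ?_⟩
    push_cast at hN
    intro t' ht'
    rcases Finset.mem_insert.mp ht' with rfl | ht'
    · exact he N ((hN.of_mul_left _).trans (hw'q.trans hw₂))
    · exact hw N ((hN.of_mul_right _).trans hw'M) t' ht'

noncomputable def relevantPairs (k r : ℝ) : Finset (ℤ × ℤ) :=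
  Finset.Icc 1 ⌈r ^ 2⌉ ×ˢ Finset.Icc (-⌈r ^ 2 * k + (k + r ^ 2) ^ 2⌉) ⌈r ^ 2 * k + (k + r ^ 2) ^ 2⌉

lemma abs_sub_sq_le {k r m b p N : ℝ} (hm₀ : 0 ≤ m) (hm : m ≤ r ^ 2) (hb : |b - N| ≤ k)
    (hbpm : |b + 2 * p + m - N| ≤ k) : |m * (b - N) - p ^ 2| ≤ r ^ 2 * k + (k + r ^ 2) ^ 2 := by
  rw [abs_le] at hb hbpm ⊢
  have hk : 0 ≤ k := by linarith
  have hp : |p| ≤ k + r ^ 2 := abs_le.mpr ⟨by linarith, by linarith⟩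
  have hp2 : p ^ 2 ≤ (k + r ^ 2) ^ 2 := sq_le_sq' (abs_le.mp hp).1 (abs_le.mp hp).2
  constructor <;> nlinarith

lemma mem_relevantPairs {k r : ℝ} {N : ℕ} {l l' : ℤ × ℤ × ℤ} (hl : l ∈ annulus k N)
    (hl' : l' ∈ annulus k N) (hr : l - l' ∈ ball3 r) (h0 : l - l' ≠ 0) :
    (sqNorm (l - l'), sqNorm (cross3 l' (l - l')) - sqNorm (l - l') * N) ∈ relevantPairs k r := by
  set d := l - l' with hd
  have hl_eq : sqNorm l = sqNorm l' + 2 * dot3 l' d + sqNorm d := by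
    rw [← sqNorm_add, hd, add_sub_cancel]
  have hb : |(sqNorm l' : ℝ) - N| ≤ k := abs_le.mpr ⟨by linarith [hl'.1], by linarith [hl'.2]⟩
  have hbpm : |(sqNorm l' : ℝ) + 2 * dot3 l' d + sqNorm d - N| ≤ k := by
    obtain ⟨hl₁, hl₂⟩ := hl
    rw [hl_eq] at hl₁ hl₂
    push_cast at hl₁ hl₂
    exact abs_le.mpr ⟨by linarith, by linarith⟩
  have hA := abs_le.mp (abs_sub_sq_le (by exact_mod_cast sqNorm_nonneg d) hr hb hbpm)
  simp only [relevantPairs, Finset.mem_product, Finset.mem_Icc, sqNorm_cross3]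
  have hX := Int.le_ceil (r ^ 2 * k + (k + r ^ 2) ^ 2)
  refine ⟨⟨sqNorm_pos h0, Int.cast_le.mp (hr.trans (Int.le_ceil _))⟩, ?_, ?_⟩ <;>
    rw [← Int.cast_le (R := ℝ)] <;> push_cast <;> linarith

lemma annulus_sub_annulus_inter_ball3_eq {k r : ℝ} (hk : 0 ≤ k) {N : ℕ} {l₀ : ℤ × ℤ × ℤ}
    (hl₀ : sqNorm l₀ = N) (hN : ∀ t ∈ relevantPairs k r, NonresidueExactDvd t.1 (t.1 * N + t.2)) :
    (annulus k N - annulus k N) ∩ ball3 r = {0} := by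
  ext u
  refine ⟨?_, ?_⟩
  · rintro ⟨⟨l, hl, l', hl', rfl⟩, hr⟩
    by_contra h0
    exact (hN _ (mem_relevantPairs hl hl' hr h0)).sqNorm_ne
      (dot3_cross3_right l' (l - l')) (by ring)
  · rintro rfl
    have hl₀' : l₀ ∈ annulus k N := by
      simp only [annulus, Set.mem_ofPred_eq, hl₀, Int.cast_natCast]
      constructor <;> linarith
    exact ⟨⟨l₀, hl₀', l₀, hl₀', sub_self l₀⟩, by simp [ball3, sqNorm]; positivity⟩

theorem stmt10_general (k r : ℝ) (hk : 0 < k) :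
    Set.Infinite {N : ℕ | (annulus k N - annulus k N) ∩ ball3 r = {0}} := by
  obtain ⟨M, hM, w, hw⟩ := exists_modulus_forall_nonresidueExactDvd (relevantPairs k r)
    fun t ht => by simp only [relevantPairs, Finset.mem_product, Finset.mem_Icc] at ht; omega
  refine Set.infinite_of_forall_exists_gt fun B => ?_
  set x := w.1 + M * (B + |w.1| + 1)
  set l₀ : ℤ × ℤ × ℤ := (x, w.2)
  have hl₀ : sqNorm l₀ ≡ sqNorm w [ZMOD M] := sqNorm_modEq Int.modEq_add_fac_self rfl rfl
  have hN : ((sqNorm l₀).toNat : ℤ) = sqNorm l₀ := Int.toNat_of_nonneg (sqNorm_nonneg l₀)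
  refine ⟨(sqNorm l₀).toNat,
    annulus_sub_annulus_inter_ball3_eq hk.le hN.symm (hw _ (hN ▸ hl₀)), ?_⟩
  have hM₁ : (1 : ℤ) ≤ M := by exact_mod_cast hM
  have hx : (B : ℤ) < x := by nlinarith [neg_abs_le w.1, abs_nonneg w.1]
  have : (B : ℤ) < sqNorm l₀ := by
    simp only [sqNorm, l₀]; nlinarith [sq_nonneg w.2.1, sq_nonneg w.2.2]
  omega

/-- Mallet-Paret–Sell number-theoretic lemma (Proposition 5.1): for every k > 0 and r > 0
there exist infinitely many N ∈ ℕ with (𝒞^k_N − 𝒞^k_N) ∩ 𝓑_r = {0}. -/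
theorem stmt10 (k r : ℝ) (hk : 0 < k) (hr : 0 < r) :
    Set.Infinite {N : ℕ | (annulus k N - annulus k N) ∩ ball3 r = {0}} :=
  stmt10_general k r hk
end

section
/- Let H be a separable Hilbert space with orthonormal basis (e_n) and A the diagonal operator A e_n = λ_n e_n with 0 < λ_1 ≤ λ_2 ≤ ⋯. For N ∈ ℕ and k > 0 with k ≤ λ_N/2, let 𝓟_{k,N} be the projection onto the modes with λ_j < λ_N − k. Then for every v, ((αA^{−γ} − A)𝓟_{k,N}v, 𝓟_{k,N}v) ≥ (μ̄ + k)‖𝓟_{k,N}v‖²_H, where γ ≥ 0, μ̄ := (λ_{N+1}^{1+γ} − λ_N^{1+γ})/(λ_{N+1}^γ + λ_N^γ), and α := λ_N^{1+γ}λ_{N+1}^γ/(λ_N^γ+λ_{N+1}^γ) + λ_{N+1}^{1+γ}λ_N^γ/(λ_N^γ+λ_{N+1}^γ). -/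
/-!
Write `a = λ_N`, `b = λ_{N+1}` and `C = b^γ (a + b) / (a^γ + b^γ)`. Then `μ̄ + a = C` and
`α = a^γ C`, so for a mode `x = λ_j ≤ a` we get `αx^{-γ} = C (a / x)^γ ≥ C` and
`αx^{-γ} - x ≥ μ̄ + (a - x) > μ̄ + k`. Since the `λ_j` increase, only the finitely many
modes `j < N` satisfy `λ_j < λ_N - k`, so both series are finite sums and compare termwise.
-/

open Real

section Spectral

variable {a b γ : ℝ}

lemma spectralGap_add_eq (ha : 0 < a) (hb : 0 < b) :
    (b ^ (1 + γ) - a ^ (1 + γ)) / (b ^ γ + a ^ γ) + a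
      = b ^ γ * (a + b) / (a ^ γ + b ^ γ) := by
  have : 0 < a ^ γ + b ^ γ := by positivity
  rw [rpow_add ha, rpow_add hb, rpow_one, rpow_one, add_comm (b ^ γ)]
  field_simp
  ring

lemma alpha_eq_rpow_mul (ha : 0 < a) (hb : 0 < b) :
    a ^ (1 + γ) * b ^ γ / (a ^ γ + b ^ γ) + b ^ (1 + γ) * a ^ γ / (a ^ γ + b ^ γ)
      = a ^ γ * (b ^ γ * (a + b) / (a ^ γ + b ^ γ)) := by
  rw [rpow_add ha, rpow_add hb, rpow_one, rpow_one]
  ring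

lemma le_rpow_mul_mul_rpow_neg {C x : ℝ} (hγ : 0 ≤ γ) (hC : 0 ≤ C) (hx : 0 < x)
    (hxa : x ≤ a) :
    C ≤ a ^ γ * C * x ^ (-γ) := by
  have ha : 0 < a := hx.trans_le hxa
  have hax : a ^ (-γ) ≤ x ^ (-γ) := rpow_le_rpow_of_nonpos hx hxa (neg_nonpos.mpr hγ)
  calc C = a ^ γ * C * a ^ (-γ) := by
        rw [rpow_neg ha.le, mul_right_comm, mul_inv_cancel₀ (by positivity), one_mul]
    _ ≤ a ^ γ * C * x ^ (-γ) := by gcongr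

end Spectral

lemma Monotone.finite_setOf_lt {α : Type*} [Preorder α] {l : ℕ → α} (hmono : Monotone l)
    {t : α} {N : ℕ} (ht : t ≤ l N) : {n | l n < t}.Finite :=
  (Set.finite_Iio N).subset fun _ hn => not_le.mp fun hNn => (ht.trans (hmono hNn)).not_gt hn

lemma summable_ite_of_finite {ι M : Type*} [AddCommMonoid M] [TopologicalSpace M]
    {p : ι → Prop} [DecidablePred p] (hp : {n | p n}.Finite) (f : ι → M) :
    Summable fun n => if p n then f n else 0 :=
  summable_of_hasFiniteSupport <| hp.subset fun _ hn => by_contra fun h => hn (if_neg h)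

theorem stmt13_general (l : ℕ → ℝ) (hl : 0 < l 0) (hmono : Monotone l)
    (γ k : ℝ) (hγ : 0 ≤ γ) (hk : 0 < k) (N : ℕ)
    (μ α : ℝ)
    (hμ : μ = (l (N + 1) ^ (1 + γ) - l N ^ (1 + γ)) / (l (N + 1) ^ γ + l N ^ γ))
    (hα : α = l N ^ (1 + γ) * l (N + 1) ^ γ / (l N ^ γ + l (N + 1) ^ γ)
        + l (N + 1) ^ (1 + γ) * l N ^ γ / (l N ^ γ + l (N + 1) ^ γ))
    (v : ℕ → ℝ) :
    (∑' n, if l n < l N - k then (α * l n ^ (-γ) - l n) * v n ^ 2 else 0)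
      ≥ (μ + k) * ∑' n, if l n < l N - k then v n ^ 2 else 0 := by
  have hpos : ∀ n, 0 < l n := fun n => hl.trans_le (hmono n.zero_le)
  have ha := hpos N
  have hb := hpos (N + 1)
  have hgap := spectralGap_add_eq (γ := γ) ha hb
  have hα' : α = l N ^ γ * (μ + l N) := by rw [hα, hμ, hgap, alpha_eq_rpow_mul ha hb]
  have hμa : 0 ≤ μ + l N := by rw [hμ, hgap]; positivity
  have hlow : {n | l n < l N - k}.Finite := hmono.finite_setOf_lt (by linarith : l N - k ≤ l N)
  rw [ge_iff_le, ← tsum_mul_left]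
  refine Summable.tsum_le_tsum (fun n => ?_) ?_ (summable_ite_of_finite hlow _)
  · rw [mul_ite, mul_zero]
    split_ifs with hn
    · have : μ + l N ≤ α * l n ^ (-γ) :=
        hα' ▸ le_rpow_mul_mul_rpow_neg hγ hμa (hpos n) (by linarith)
      exact mul_le_mul_of_nonneg_right (by linarith) (sq_nonneg _)
    · rfl
  · simpa only [mul_ite, mul_zero] using summable_ite_of_finite hlow _

/-- Lower-mode estimate (1.start) from the proof of Theorem 3.2:
((αA^{−γ} − A)𝓟_{k,N}v, 𝓟_{k,N}v) ≥ (μ̄ + k)‖𝓟_{k,N}v‖²_H, where 𝓟_{k,N}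
projects onto modes with λ_j < λ_N − k, written in the coordinates of the
orthonormal eigenbasis of the diagonal operator A e_n = λ_n e_n. -/
theorem stmt13 (l : ℕ → ℝ) (hl : 0 < l 0) (hmono : Monotone l)
    (γ k : ℝ) (hγ : 0 ≤ γ) (hk : 0 < k) (N : ℕ) (hkN : k ≤ l N / 2)
    (μ α : ℝ)
    (hμ : μ = (l (N + 1) ^ (1 + γ) - l N ^ (1 + γ)) / (l (N + 1) ^ γ + l N ^ γ))
    (hα : α = l N ^ (1 + γ) * l (N + 1) ^ γ / (l N ^ γ + l (N + 1) ^ γ)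
        + l (N + 1) ^ (1 + γ) * l N ^ γ / (l N ^ γ + l (N + 1) ^ γ))
    (v : ℕ → ℝ) (hv : Summable fun n => l n * v n ^ 2) :
    (∑' n, if l n < l N - k then (α * l n ^ (-γ) - l n) * v n ^ 2 else 0)
      ≥ (μ + k) * ∑' n, if l n < l N - k then v n ^ 2 else 0 :=
  stmt13_general l hl hmono γ k hγ hk N μ α hμ hα v
end
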